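/- arXiv:1610.05261 — 6 statements merged into one kernel-verified Lean document; each statement's English description precedes it below -/
import Mathlib

section
/- The discrete diffusion matrix of the q-times integrated Wiener process, Q(h) with entries Q(h)_{ij} = σ² h^{2q+1-i-j} / ((2q+1-i-j)(q-i)!(q-j)!), equals the integral ∫_0^h exp(U(h-τ)) e_q σ² e_q^T exp(U(h-τ))^T dτ, where U is the upper shift matrix and e_q is the last standard basis vector. -/
open Matrix

open intervalIntegral

open Finset
open scoped Nat

/-! Since `U` is nilpotent, `exp (t • U)` is the polynomial `∑ₖ tᵏ Uᵏ / k!`, whose last column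
is `(t ^ (q - i) / (q - i)!)ᵢ`. The integrand is therefore
`σ² (h - τ) ^ ((q - i) + (q - j)) / ((q - i)! (q - j)!)`, and integrating this monomial gives
`Q i j`. -/

theorem NormedSpace.exp_eq_sum_range_of_pow_eq_zero {𝔸 : Type*} [Ring 𝔸] [Algebra ℚ 𝔸]
    [TopologicalSpace 𝔸] [IsTopologicalRing 𝔸] {a : 𝔸} {k : ℕ} (h : a ^ k = 0) :
    NormedSpace.exp a = ∑ i ∈ range k, (i ! : ℚ)⁻¹ • a ^ i := by
  rw [NormedSpace.exp_eq_tsum_rat]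
  exact tsum_eq_sum fun i hi => by
    rw [pow_eq_zero_of_le (by simpa using hi) h, smul_zero]

def shiftMatrix (n : ℕ) (R : Type*) [Zero R] [One R] : Matrix (Fin n) (Fin n) R :=
  of fun i j => if (j : ℕ) = i + 1 then 1 else 0

variable {n : ℕ} {R : Type*}

theorem shiftMatrix_pow_apply [Semiring R] (k : ℕ) (i j : Fin n) :
    (shiftMatrix n R ^ k) i j = if (j : ℕ) = i + k then 1 else 0 := by
  induction k generalizing i with
  | zero => simp [one_apply, Fin.ext_iff, eq_comm]
  | succ k ih =>
    simp_rw [pow_succ', mul_apply, ih]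
    simp only [shiftMatrix, of_apply, ite_mul, one_mul, zero_mul]
    rw [Fin.sum_univ_eq_sum_range (fun b => if b = (i : ℕ) + 1 then
      (if (j : ℕ) = b + k then (1 : R) else 0) else 0), sum_ite_eq']
    split_ifs <;> simp_all <;> omega

theorem shiftMatrix_pow_eq_zero [Semiring R] {k : ℕ} (hk : n ≤ k) : shiftMatrix n R ^ k = 0 := by
  ext i j
  rw [shiftMatrix_pow_apply, if_neg (by omega), Matrix.zero_apply]

theorem exp_smul_shiftMatrix_apply_last {𝕂 : Type*} [Field 𝕂] [CharZero 𝕂] [TopologicalSpace 𝕂]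
    [IsTopologicalRing 𝕂] {q : ℕ} (t : 𝕂) (i : Fin (q + 1)) :
    NormedSpace.exp (t • shiftMatrix (q + 1) 𝕂) i (Fin.last q) = t ^ (q - i) / (q - i)! := by
  have hnil : (t • shiftMatrix (q + 1) 𝕂) ^ (q + 1) = 0 := by
    rw [smul_pow, shiftMatrix_pow_eq_zero le_rfl, smul_zero]
  rw [NormedSpace.exp_eq_sum_range_of_pow_eq_zero hnil, Matrix.sum_apply, sum_eq_single (q - i)]
  · simp [smul_pow, shiftMatrix_pow_apply, Rat.smul_def, div_eq_inv_mul,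
      Nat.add_sub_cancel' i.is_le]
  · intro b _ hb
    simp [smul_pow, shiftMatrix_pow_apply]
    omega
  · simp

theorem mul_smul_vecMulVec_single_mul_transpose_apply {ι : Type*} [Fintype ι] [DecidableEq ι]
    [CommSemiring R] (M : Matrix ι ι R) (c : R) (k i j : ι) :
    (M * (c • vecMulVec (Pi.single k (1 : R)) (Pi.single k 1)) * Mᵀ) i j = c * M i k * M j k := by
  simp [mul_vecMulVec, vecMulVec_mul, vecMulVec_apply, mul_assoc]

theorem integral_sub_pow (a b : ℝ) (n : ℕ) :
    ∫ τ in a..b, (b - τ) ^ n = (b - a) ^ (n + 1) / (n + 1) := by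
  rw [integral_comp_sub_left (fun x => x ^ n), integral_pow]
  simp

theorem iwp_diffusion_integral_general (q : ℕ) (σ h : ℝ)
    (U : Matrix (Fin (q + 1)) (Fin (q + 1)) ℝ)
    (hU : ∀ i j : Fin (q + 1), U i j = if (j : ℕ) = (i : ℕ) + 1 then 1 else 0)
    (e : Fin (q + 1) → ℝ) (he : e = Pi.single (Fin.last q) 1)
    (Q : Matrix (Fin (q + 1)) (Fin (q + 1)) ℝ)
    (hQ : ∀ i j : Fin (q + 1),
      Q i j = σ ^ 2 * h ^ (2 * q + 1 - (i : ℕ) - (j : ℕ)) /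
        (((2 * q + 1 - (i : ℕ) - (j : ℕ)) * (q - (i : ℕ)).factorial *
          (q - (j : ℕ)).factorial : ℕ) : ℝ)) :
    ∀ i j : Fin (q + 1),
      Q i j = ∫ τ in (0 : ℝ)..h,
        ((NormedSpace.exp ((h - τ) • U)) * (σ ^ 2 • Matrix.vecMulVec e e) *
          (NormedSpace.exp ((h - τ) • U))ᵀ) i j := by
  intro i j
  have hU_eq : U = shiftMatrix (q + 1) ℝ := Matrix.ext hU
  have integrand (τ : ℝ) :
      (NormedSpace.exp ((h - τ) • U) * (σ ^ 2 • vecMulVec e e) *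
          (NormedSpace.exp ((h - τ) • U))ᵀ) i j =
        σ ^ 2 / ((q - i)! * (q - j)!) * (h - τ) ^ ((q - i) + (q - j)) := by
    rw [he, hU_eq, mul_smul_vecMulVec_single_mul_transpose_apply,
      exp_smul_shiftMatrix_apply_last, exp_smul_shiftMatrix_apply_last, pow_add]
    field_simp
  have hexponent : 2 * q + 1 - (i : ℕ) - j = (q - i) + (q - j) + 1 := by omega
  simp_rw [integrand, integral_const_mul, integral_sub_pow, sub_zero, hQ, hexponent]
  push_cast
  field_simp

/-- The discrete diffusion matrix of the q-times integrated Wiener process,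
Q(h)_{ij} = σ² h^{2q+1-i-j} / ((2q+1-i-j)(q-i)!(q-j)!), equals
∫_0^h exp(U(h-τ)) e_q σ² e_qᵀ exp(U(h-τ))ᵀ dτ. -/
theorem iwp_diffusion_integral (q : ℕ) (σ h : ℝ) (hσ : 0 < σ) (hh : 0 < h)
    (U : Matrix (Fin (q + 1)) (Fin (q + 1)) ℝ)
    (hU : ∀ i j : Fin (q + 1), U i j = if (j : ℕ) = (i : ℕ) + 1 then 1 else 0)
    (e : Fin (q + 1) → ℝ) (he : e = Pi.single (Fin.last q) 1)
    (Q : Matrix (Fin (q + 1)) (Fin (q + 1)) ℝ)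
    (hQ : ∀ i j : Fin (q + 1),
      Q i j = σ ^ 2 * h ^ (2 * q + 1 - (i : ℕ) - (j : ℕ)) /
        (((2 * q + 1 - (i : ℕ) - (j : ℕ)) * (q - (i : ℕ)).factorial *
          (q - (j : ℕ)).factorial : ℕ) : ℝ)) :
    ∀ i j : Fin (q + 1),
      Q i j = ∫ τ in (0 : ℝ)..h,
        ((NormedSpace.exp ((h - τ) • U)) * (σ ^ 2 • Matrix.vecMulVec e e) *
          (NormedSpace.exp ((h - τ) • U))ᵀ) i j :=
  iwp_diffusion_integral_general q σ h U hU e he Q hQ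
end

section
/- The discrete diffusion matrix Q(h) with entries Q(h)_{ij} = σ² h^{2q+1-i-j} / ((2q+1-i-j)(q-i)!(q-j)!) is symmetric and positive semidefinite for every h ≥ 0. -/
/-!
With `v i t = t ^ (q - i) / (q - i)!`, the entries of `Q h` are `σ² ∫₀ʰ v i t * v j t dt`, so
`Q h` is `σ²` times the Gram matrix of the functions `v i` in `L²(0, h)`, and Gram matrices are
positive semidefinite.
-/

open MeasureTheory

theorem Matrix.posSemidef_integral_mul {ι α : Type*} [Finite ι] [MeasurableSpace α]
    {μ : Measure α} {f : ι → α → ℝ} (hf : ∀ i, MemLp (f i) 2 μ) :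
    (Matrix.of fun i j => ∫ a, f i a * f j a ∂μ).PosSemidef := by
  have hgram : Matrix.of (fun i j => ∫ a, f i a * f j a ∂μ)
      = Matrix.gram ℝ fun i => (hf i).toLp (f i) := by
    ext i j
    rw [Matrix.of_apply, Matrix.gram_apply, L2.inner_def]
    refine integral_congr_ae ?_
    filter_upwards [(hf i).coeFn_toLp, (hf j).coeFn_toLp] with a hi hj
    simp [hi, hj, mul_comm]
  rw [hgram]
  exact Matrix.posSemidef_gram ℝ _

theorem Continuous.memLp_two_restrict_Ioc {f : ℝ → ℝ} (hf : Continuous f) (a b : ℝ) :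
    MemLp f 2 (volume.restrict (Set.Ioc a b)) :=
  (memLp_two_iff_integrable_sq hf.aestronglyMeasurable).2 (hf.pow 2).integrableOn_Ioc

theorem Matrix.posSemidef_intervalIntegral_mul {ι : Type*} [Finite ι] {f : ι → ℝ → ℝ}
    (hf : ∀ i, Continuous (f i)) {a b : ℝ} (hab : a ≤ b) :
    (Matrix.of fun i j => ∫ t in a..b, f i t * f j t).PosSemidef := by
  simp only [intervalIntegral.integral_of_le hab]
  exact Matrix.posSemidef_integral_mul fun i => (hf i).memLp_two_restrict_Ioc a b

theorem integral_pow_div_factorial_mul_pow_div_factorial (a b : ℕ) (h : ℝ) :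
    ∫ t in (0 : ℝ)..h, t ^ a / a.factorial * (t ^ b / b.factorial)
      = h ^ (a + b + 1) / (((a + b + 1) * a.factorial * b.factorial : ℕ) : ℝ) := by
  have key : ∀ t : ℝ, t ^ a / a.factorial * (t ^ b / b.factorial)
      = t ^ (a + b) / (a.factorial * b.factorial) := fun t => by rw [pow_add]; ring
  simp only [key, intervalIntegral.integral_div, integral_pow]
  rw [zero_pow (Nat.succ_ne_zero _), sub_zero]
  push_cast
  field_simp

theorem iwp_diffusion_symm_posSemidef_general (q : ℕ) (σ : ℝ)
    (Q : ℝ → Matrix (Fin (q + 1)) (Fin (q + 1)) ℝ)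
    (hQ : ∀ (h : ℝ) (i j : Fin (q + 1)),
      Q h i j = σ ^ 2 * h ^ (2 * q + 1 - (i : ℕ) - (j : ℕ)) /
        (((2 * q + 1 - (i : ℕ) - (j : ℕ)) * (q - (i : ℕ)).factorial *
          (q - (j : ℕ)).factorial : ℕ) : ℝ)) :
    ∀ h : ℝ, 0 ≤ h → (Q h).IsSymm ∧ (Q h).PosSemidef := by
  intro h hh
  set v : Fin (q + 1) → ℝ → ℝ := fun i t => t ^ (q - (i : ℕ)) / (q - (i : ℕ)).factorial
  have hQ_gram : Q h = σ ^ 2 • Matrix.of fun i j => ∫ t in (0 : ℝ)..h, v i t * v j t := by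
    ext i j
    have hdeg : 2 * q + 1 - (i : ℕ) - (j : ℕ) = (q - (i : ℕ)) + (q - (j : ℕ)) + 1 := by omega
    rw [hQ, Matrix.smul_apply, Matrix.of_apply, integral_pow_div_factorial_mul_pow_div_factorial,
      hdeg, smul_eq_mul, mul_div_assoc]
  have hpsd : (Q h).PosSemidef := by
    rw [hQ_gram]
    exact (Matrix.posSemidef_intervalIntegral_mul (fun i => by fun_prop) hh).smul (sq_nonneg σ)
  exact ⟨Matrix.isHermitian_iff_isSymm.1 hpsd.isHermitian, hpsd⟩

/-- The discrete diffusion matrix Q(h) with entries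
Q(h)_{ij} = σ² h^{2q+1-i-j}/((2q+1-i-j)(q-i)!(q-j)!) is symmetric and positive semidefinite
for every h ≥ 0. -/
theorem iwp_diffusion_symm_posSemidef (q : ℕ) (σ : ℝ) (hσ : 0 < σ)
    (Q : ℝ → Matrix (Fin (q + 1)) (Fin (q + 1)) ℝ)
    (hQ : ∀ (h : ℝ) (i j : Fin (q + 1)),
      Q h i j = σ ^ 2 * h ^ (2 * q + 1 - (i : ℕ) - (j : ℕ)) /
        (((2 * q + 1 - (i : ℕ) - (j : ℕ)) * (q - (i : ℕ)).factorial *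
          (q - (j : ℕ)).factorial : ℕ) : ℝ)) :
    ∀ h : ℝ, 0 ≤ h → (Q h).IsSymm ∧ (Q h).PosSemidef :=
  iwp_diffusion_symm_posSemidef_general q σ Q hQ
end

section
/- For the once integrated Wiener process (q = 1): if the state at time t_n is the vector m = (y_n, z_n) with zero covariance, then the Kalman predicted mean is m⁻ = (y_n + h z_n, z_n) and predicted covariance is Q(h), and after updating on the observation z_{n+1} = f(t_{n+1}, y_n + h z_n) with exact derivative likelihood, the posterior mean is (y_n + (h/2)(z_n + z_{n+1}), z_{n+1}), i.e. the trapezoidal rule update. -/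
open Matrix

/-- For the once integrated Wiener process (q = 1): starting from mean (y, z)
with zero covariance, the Kalman prediction is m⁻ = (y + h z, z) with covariance Q(h), and the
update on the observation z' = f(t_{n+1}, y + h z) with exact derivative likelihood gives the
posterior mean (y + (h/2)(z + z'), z'), i.e. the trapezoidal rule update. -/
theorem iwp1_trapezoidal (σ h y z tnext : ℝ) (hσ : 0 < σ) (hh : 0 < h)
    (f : ℝ → ℝ → ℝ) :
    let A : Matrix (Fin 2) (Fin 2) ℝ := !![1, h; 0, 1]
    let Q : Matrix (Fin 2) (Fin 2) ℝ := σ ^ 2 • !![h ^ 3 / 3, h ^ 2 / 2; h ^ 2 / 2, h]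
    let mpred : Fin 2 → ℝ := A.mulVec ![y, z]
    let Cpred : Matrix (Fin 2) (Fin 2) ℝ := A * 0 * Aᵀ + Q
    let znew : ℝ := f tnext (y + h * z)
    let K : Fin 2 → ℝ := fun i => Cpred i 1 / Cpred 1 1
    mpred = ![y + h * z, z] ∧ Cpred = Q ∧
      (fun i => mpred i + K i * (znew - mpred 1)) =
        ![y + h / 2 * (z + znew), znew] := by
  intro A Q mpred Cpred znew K
  have hσ' : σ ≠ 0 := ne_of_gt hσ
  have hh' : h ≠ 0 := ne_of_gt hh
  have hm : mpred = ![y + h * z, z] := by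
    funext i
    fin_cases i <;>
      simp [mpred, A, Matrix.mulVec, dotProduct, Fin.sum_univ_succ, mul_comm]
  have hC : Cpred = Q := by
    simp [Cpred]
  refine ⟨hm, hC, ?_⟩
  funext i
  have h00 : Cpred 1 1 = σ ^ 2 * h := by
    simp [hC, Q]
  have h01 : Cpred 0 1 = σ ^ 2 * (h ^ 2 / 2) := by
    simp [hC, Q]
  fin_cases i <;>
    simp [K, hm, h00, h01] <;>
    field_simp <;> ring
end

section
/- For the once integrated Wiener process Kalman update with zero prior covariance: the posterior covariance after prediction with Q(h) = σ²[[h³/3, h²/2],[h²/2, h]] and exact update of the derivative component equals σ²[[h³/12, 0],[0, 0]]. -/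
/-- For the IWP(1) Kalman update with zero prior covariance: the posterior
covariance after prediction with Q(h) = σ²[[h³/3, h²/2],[h²/2, h]] and exact update of the
derivative component equals σ²[[h³/12, 0],[0, 0]]. -/
theorem iwp1_posterior_covariance (σ h : ℝ) (hσ : 0 < σ) (hh : 0 < h) :
    let Cpred : Matrix (Fin 2) (Fin 2) ℝ := σ ^ 2 • !![h ^ 3 / 3, h ^ 2 / 2; h ^ 2 / 2, h]
    let K : Fin 2 → ℝ := fun i => Cpred i 1 / Cpred 1 1
    (Matrix.of fun i j => Cpred i j - K i * Cpred 1 1 * K j) =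
      σ ^ 2 • !![h ^ 3 / 12, 0; 0, 0] := by
  intro Cpred K
  have hσh : σ ^ 2 * h ≠ 0 := by positivity
  ext i j
  fin_cases i <;> fin_cases j <;>
    simp [Cpred, K, Matrix.smul_apply] <;>
    field_simp <;> ring
end

section
/- For the twice integrated Wiener process (q = 2) at steady state, the rescaled Kalman gain vector is K* = ((3 + √3)/12, 1, (3 − √3)/2). -/
open Matrix

/-!
The noise scale `σ² h⁵` multiplies both `C` and `Q̃(h)`, so it cancels from the gain, which is
column 1 of `C⁻` divided by its diagonal entry. Since `C` has a zero middle row and column, only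
`c₀₂` and `c₂₂` enter that column: it equals `(2(c₀₂ + c₂₂) + 1/8, 4c₂₂ + 1/3, 2c₂₂ + 1/4)`,
and at the steady state the ratios simplify using `(√3)² = 3`.
-/

theorem Matrix.smul_apply_div_smul_apply {m n K : Type*} [Field K] {s : K} (hs : s ≠ 0)
    (A : Matrix m n K) (i k : m) (j l : n) :
    (s • A) i j / (s • A) k l = A i j / A k l := by
  simp only [smul_apply, smul_eq_mul, mul_div_mul_left _ _ hs]

theorem iwp2_diffusion_eq_smul (s : ℝ) :
    (Matrix.of fun i j : Fin 3 =>
      s / (((5 - (i : ℕ) - (j : ℕ)) * (2 - (i : ℕ)).factorial * (2 - (j : ℕ)).factorial *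
        (i : ℕ).factorial * (j : ℕ).factorial : ℕ) : ℝ)) =
      s • !![1 / 20, 1 / 8, 1 / 12; 1 / 8, 1 / 3, 1 / 4; 1 / 12, 1 / 4, 1 / 4] := by
  ext i j
  fin_cases i <;> fin_cases j <;> norm_num [Nat.factorial, div_eq_mul_inv]

theorem iwp2_pred_cov_col_one (c00 a b : ℝ) (i : Fin 3) :
    (!![1, 1, 1; 0, 1, 2; 0, 0, 1] * !![c00, 0, a; 0, 0, 0; a, 0, b] *
        (!![1, 1, 1; 0, 1, 2; 0, 0, 1])ᵀ +
      !![1 / 20, 1 / 8, 1 / 12; 1 / 8, 1 / 3, 1 / 4; 1 / 12, 1 / 4, 1 / 4] :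
        Matrix (Fin 3) (Fin 3) ℝ) i 1 =
      ![2 * (a + b) + 1 / 8, 4 * b + 1 / 3, 2 * b + 1 / 4] i := by
  fin_cases i <;> simp [vecMul, dotProduct, Fin.sum_univ_three] <;> ring

theorem iwp2_gain_at_steady_state (i : Fin 3) :
    ![2 * (-√3 / 144 + √3 / 24) + 1 / 8, 4 * (√3 / 24) + 1 / 3, 2 * (√3 / 24) + 1 / 4] i /
      (4 * (√3 / 24) + 1 / 3) = ![(3 + √3) / 12, 1, (3 - √3) / 2] i := by
  have sqrt3_sq : √3 ^ 2 = 3 := Real.sq_sqrt (by norm_num)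
  rw [div_eq_iff (by positivity)]
  fin_cases i
  · simp only [Fin.zero_eta, cons_val_zero]
    linear_combination (-1 / 72) * sqrt3_sq
  · simp
  · simp only [Fin.reduceFinMk, cons_val]
    linear_combination (1 / 12) * sqrt3_sq

/-- For the twice integrated Wiener process (q = 2) at steady state, the
rescaled Kalman gain vector is K* = ((3 + √3)/12, 1, (3 − √3)/2). -/
theorem iwp2_steady_state_gain (σ h c00 : ℝ) (hσ : 0 < σ) (hh : 0 < h) :
    let P : Matrix (Fin 3) (Fin 3) ℝ := !![1, 1, 1; 0, 1, 2; 0, 0, 1]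
    let Qt : Matrix (Fin 3) (Fin 3) ℝ := Matrix.of fun i j =>
      σ ^ 2 * h ^ 5 /
        (((5 - (i : ℕ) - (j : ℕ)) * (2 - (i : ℕ)).factorial * (2 - (j : ℕ)).factorial *
          (i : ℕ).factorial * (j : ℕ).factorial : ℕ) : ℝ)
    let C : Matrix (Fin 3) (Fin 3) ℝ := (σ ^ 2 * h ^ 5) •
      !![c00, 0, -(Real.sqrt 3) / 144; 0, 0, 0; -(Real.sqrt 3) / 144, 0, Real.sqrt 3 / 24]
    let Cpred : Matrix (Fin 3) (Fin 3) ℝ := P * C * Pᵀ + Qt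
    (fun i => Cpred i 1 / Cpred 1 1) =
      ![(3 + Real.sqrt 3) / 12, 1, (3 - Real.sqrt 3) / 2] := by
  intro P Qt C Cpred
  have hscale : σ ^ 2 * h ^ 5 ≠ 0 := by positivity
  have hCpred : Cpred = (σ ^ 2 * h ^ 5) •
      (P * !![c00, 0, -√3 / 144; 0, 0, 0; -√3 / 144, 0, √3 / 24] * Pᵀ +
        !![1 / 20, 1 / 8, 1 / 12; 1 / 8, 1 / 3, 1 / 4; 1 / 12, 1 / 4, 1 / 4]) := by
    simp only [Cpred, C, Qt, iwp2_diffusion_eq_smul, Matrix.mul_smul, Matrix.smul_mul, smul_add]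
  funext i
  rw [hCpred, smul_apply_div_smul_apply hscale, iwp2_pred_cov_col_one, iwp2_pred_cov_col_one]
  exact iwp2_gain_at_steady_state i
end

section
/- For the IWP(2) covariance recursion, if C = σ²h⁵[[c₀₀,0,c₀₂],[0,0,0],[c₀₂,0,c₂₂]] is a valid covariance matrix, then after one Kalman predict–update step (with Pascal matrix propagation, rescaled diffusion Q̃(h), and exact update of the second component) the new covariance has the same structural form: its row and column with index 1 are zero, and in particular the new (2,2) coefficient equals (16c₂₂ + 1)/(16(12c₂₂ + 1)). -/
open Matrix

/-!
Both the propagated covariance `P C Pᵀ` and the rescaled diffusion `Q̃(h)` are multiples of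
`σ²h⁵`, and the measurement update commutes with scalar multiples, so it suffices to update the
normalised predicted covariance `N`. Conditioning on an exact observation of coordinate `1`
annihilates row and column `1` of any symmetric `N` with `N₁₁ ≠ 0`, and the new `(2,2)` entry
is the Schur complement `N₂₂ - N₂₁² / N₁₁`. Positive semidefiniteness gives `c₂₂ ≥ 0`, hence
`N₁₁ = (12c₂₂ + 1)/3 > 0`.
-/

namespace Matrix

variable {n K : Type*} [Field K]

/-- `C⁺ = C - K (H C Hᵀ) Kᵀ` for an exact observation `H` of coordinate `k`; any nonzero multiple
of the unit vector `eₖ` (such as `H̃₁ = h⁻¹ e₁`) gives this same matrix. -/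
def kalmanUpdate (M : Matrix n n K) (k : n) : Matrix n n K :=
  of fun i j => M i j - M i k / M k k * M k k * (M j k / M k k)

theorem kalmanUpdate_apply (M : Matrix n n K) (k : n) (hk : M k k ≠ 0) (i j : n) :
    kalmanUpdate M k i j = M i j - M i k * M j k / M k k := by
  simp only [kalmanUpdate, of_apply, div_mul_cancel₀ _ hk, mul_div_assoc]

theorem kalmanUpdate_smul (s : K) (M : Matrix n n K) (k : n) :
    kalmanUpdate (s • M) k = s • kalmanUpdate M k := by
  ext i j
  simp only [kalmanUpdate, of_apply, smul_apply, smul_eq_mul]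
  rcases eq_or_ne s 0 with rfl | hs
  · simp
  · rw [mul_div_mul_left _ _ hs, mul_div_mul_left _ _ hs]
    ring

theorem kalmanUpdate_apply_self_right (M : Matrix n n K) (k : n) (hk : M k k ≠ 0) (i : n) :
    kalmanUpdate M k i k = 0 := by
  rw [kalmanUpdate_apply M k hk, mul_div_cancel_right₀ _ hk, sub_self]

theorem kalmanUpdate_apply_self_left {M : Matrix n n K} (hM : M.IsSymm) (k : n)
    (hk : M k k ≠ 0) (j : n) : kalmanUpdate M k k j = 0 := by
  rw [kalmanUpdate_apply M k hk, mul_div_cancel_left₀ _ hk, hM.apply, sub_self]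

theorem IsSymm.mul_mul_transpose [Fintype n] {B : Matrix n n K} (hB : B.IsSymm)
    (A : Matrix n n K) : (A * B * Aᵀ).IsSymm := by
  rw [IsSymm, transpose_mul, transpose_mul, transpose_transpose, hB.eq, Matrix.mul_assoc]

end Matrix

noncomputable section

/-- `Q̃(h) / (σ²h⁵)`. -/
def iwp2Diffusion : Matrix (Fin 3) (Fin 3) ℝ :=
  !![1 / 20, 1 / 8, 1 / 12; 1 / 8, 1 / 3, 1 / 4; 1 / 12, 1 / 4, 1 / 4]

/-- The predicted covariance `P C Pᵀ + Q̃(h)`, divided by `σ²h⁵`. -/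
def iwp2PredCov (c00 c02 c22 : ℝ) : Matrix (Fin 3) (Fin 3) ℝ :=
  !![1, 1, 1; 0, 1, 2; 0, 0, 1] * !![c00, 0, c02; 0, 0, 0; c02, 0, c22] *
    !![1, 1, 1; 0, 1, 2; 0, 0, 1]ᵀ + iwp2Diffusion

end

theorem iwp2Diffusion_smul_eq (s : ℝ) :
    (of fun i j : Fin 3 => s /
        (((5 - (i : ℕ) - (j : ℕ)) * (2 - (i : ℕ)).factorial * (2 - (j : ℕ)).factorial *
          (i : ℕ).factorial * (j : ℕ).factorial : ℕ) : ℝ)) = s • iwp2Diffusion := by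
  ext i j
  fin_cases i <;> fin_cases j <;>
    simp [iwp2Diffusion, Nat.factorial] <;> ring

theorem iwp2PredCov_isSymm (c00 c02 c22 : ℝ) : (iwp2PredCov c00 c02 c22).IsSymm := by
  refine IsSymm.add (IsSymm.mul_mul_transpose ?_ _) ?_ <;>
    exact IsSymm.ext fun i j => by fin_cases i <;> fin_cases j <;> rfl

section Entries

variable (c00 c02 c22 : ℝ)

theorem iwp2PredCov_one_one : iwp2PredCov c00 c02 c22 1 1 = (12 * c22 + 1) / 3 := by
  simp [iwp2PredCov, iwp2Diffusion, vecMul, dotProduct, Fin.sum_univ_three]; ring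

theorem iwp2PredCov_two_one : iwp2PredCov c00 c02 c22 2 1 = (8 * c22 + 1) / 4 := by
  simp [iwp2PredCov, iwp2Diffusion, vecMul, dotProduct, Fin.sum_univ_three]; ring

theorem iwp2PredCov_two_two : iwp2PredCov c00 c02 c22 2 2 = (4 * c22 + 1) / 4 := by
  simp [iwp2PredCov, iwp2Diffusion, vecMul, dotProduct, Fin.sum_univ_three]; ring

end Entries

/-- For the IWP(2) covariance recursion, if C = σ²h⁵[[c₀₀,0,c₀₂],[0,0,0],
[c₀₂,0,c₂₂]] is a valid covariance matrix, then after one Kalman predict–update step the new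
covariance has the same structural form: its row and column with index 1 are zero, and the
new (2,2) coefficient equals (16c₂₂ + 1)/(16(12c₂₂ + 1)). -/
theorem iwp2_covariance_recursion (σ h c00 c02 c22 : ℝ) (hσ : 0 < σ) (hh : 0 < h) :
    let P : Matrix (Fin 3) (Fin 3) ℝ := !![1, 1, 1; 0, 1, 2; 0, 0, 1]
    let Qt : Matrix (Fin 3) (Fin 3) ℝ := Matrix.of fun i j =>
      σ ^ 2 * h ^ 5 /
        (((5 - (i : ℕ) - (j : ℕ)) * (2 - (i : ℕ)).factorial * (2 - (j : ℕ)).factorial *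
          (i : ℕ).factorial * (j : ℕ).factorial : ℕ) : ℝ)
    let C : Matrix (Fin 3) (Fin 3) ℝ := (σ ^ 2 * h ^ 5) •
      !![c00, 0, c02; 0, 0, 0; c02, 0, c22]
    let Cpred : Matrix (Fin 3) (Fin 3) ℝ := P * C * Pᵀ + Qt
    let K : Fin 3 → ℝ := fun i => Cpred i 1 / Cpred 1 1
    let Cpost : Matrix (Fin 3) (Fin 3) ℝ :=
      Matrix.of fun i j => Cpred i j - K i * Cpred 1 1 * K j
    C.PosSemidef →
      (∀ i : Fin 3, Cpost i 1 = 0 ∧ Cpost 1 i = 0) ∧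
      Cpost 2 2 = σ ^ 2 * h ^ 5 * ((16 * c22 + 1) / (16 * (12 * c22 + 1))) := by
  intro P Qt C Cpred K Cpost hC
  have hs : 0 < σ ^ 2 * h ^ 5 := by positivity
  have hc22 : 0 ≤ c22 := by
    have h22 : 0 ≤ σ ^ 2 * h ^ 5 * c22 := by simpa [C] using hC.diag_nonneg (i := 2)
    exact nonneg_of_mul_nonneg_right h22 hs
  have hN11 : iwp2PredCov c00 c02 c22 1 1 ≠ 0 := by rw [iwp2PredCov_one_one]; positivity
  have hpost : Cpost = (σ ^ 2 * h ^ 5) • kalmanUpdate (iwp2PredCov c00 c02 c22) 1 := by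
    have hpred : Cpred = (σ ^ 2 * h ^ 5) • iwp2PredCov c00 c02 c22 := by
      simp only [Cpred, P, C, Qt, iwp2Diffusion_smul_eq, iwp2PredCov, Matrix.mul_smul,
        Matrix.smul_mul, smul_add]
    rw [← kalmanUpdate_smul, ← hpred]
    rfl
  simp only [hpost, Matrix.smul_apply, smul_eq_mul, mul_eq_zero]
  refine ⟨fun i => ⟨Or.inr (kalmanUpdate_apply_self_right _ 1 hN11 i),
    Or.inr (kalmanUpdate_apply_self_left (iwp2PredCov_isSymm c00 c02 c22) 1 hN11 i)⟩, ?_⟩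
  rw [kalmanUpdate_apply _ 1 hN11, iwp2PredCov_one_one, iwp2PredCov_two_one,
    iwp2PredCov_two_two]
  field_simp
  ring
end
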